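/- Let p > 0 and suppose a finite family of positive reals (M_e)_{e∈E} (edge multipliers) minimizes R(M) = Σ_{e∈E} M_eᵖ·|w_e|ᵖ over the set of multipliers arising as M_e = Λ_i/Λ_j (edge e from unit j to unit i) from positive unit multipliers Λ with Λ fixed to 1 on visible units. Then at this minimum, every hidden unit i is balanced: Σ_{e∈IN(i)} (M_e)ᵖ|w_e|ᵖ = Σ_{e∈OUT(i)} (M_e)ᵖ|w_e|ᵖ. (Otherwise, rescaling unit i alone would strictly decrease R, contradicting minimality.) -/

import Mathlib

/-!
Rescaling the hidden unit `i` by `exp x` multiplies the cost of every edge entering `i` by `exp (p x)`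
and of every edge leaving it by `exp (-p x)`, leaving self-loops and all other edges unchanged. The
regularizer along this curve is therefore a smooth function of `x` minimized at `x = 0`; its
derivative there, `p` times the difference of incoming and outgoing cost, must vanish.
-/

open Real Finset

noncomputable section

variable {U E : Type*} (src tgt : E → U) (w : E → ℝ) (p : ℝ)

def rescaledCost (Λ : U → ℝ) (e : E) : ℝ := (Λ (tgt e) / Λ (src e)) ^ p * |w e| ^ p

def regularizer [Fintype E] (Λ : U → ℝ) : ℝ := ∑ e, rescaledCost src tgt w p Λ e

variable {src tgt w p}

lemma rescaledCost_exp_mul (v Λ : U → ℝ) (hΛ : ∀ u, 0 < Λ u) (e : E) :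
    rescaledCost src tgt w p (fun u => exp (v u) * Λ u) e =
      exp ((v (tgt e) - v (src e)) * p) * rescaledCost src tgt w p Λ e := by
  unfold rescaledCost
  rw [mul_div_mul_comm, ← exp_sub, mul_rpow (exp_pos _).le (div_pos (hΛ _) (hΛ _)).le,
    ← exp_mul, mul_assoc]

variable [Fintype E]

lemma hasDerivAt_regularizer_exp_smul (v Λ : U → ℝ) (hΛ : ∀ u, 0 < Λ u) :
    HasDerivAt (fun x => regularizer src tgt w p (fun u => exp (x * v u) * Λ u))
      (∑ e, (v (tgt e) - v (src e)) * p * rescaledCost src tgt w p Λ e) 0 := by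
  unfold regularizer
  simp_rw [rescaledCost_exp_mul _ Λ hΛ]
  refine HasDerivAt.fun_sum fun e _ => ?_
  have hid := hasDerivAt_id (0 : ℝ)
  simpa using (((hid.mul_const _).sub (hid.mul_const _)).mul_const p).exp.mul_const
    (rescaledCost src tgt w p Λ e)

/-- Stationarity of a minimizer along the rescaling `Λ ↦ fun u => exp (x * v u) * Λ u`. -/
lemma sum_sub_mul_rescaledCost_eq_zero {hidden : U → Prop} (hp : p ≠ 0)
    (Λ : U → ℝ) (hΛpos : ∀ u, 0 < Λ u) (hΛvis : ∀ u, ¬ hidden u → Λ u = 1)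
    (hmin : ∀ Λ' : U → ℝ, (∀ u, 0 < Λ' u) → (∀ u, ¬ hidden u → Λ' u = 1) →
      regularizer src tgt w p Λ ≤ regularizer src tgt w p Λ')
    (v : U → ℝ) (hv : ∀ u, ¬ hidden u → v u = 0) :
    ∑ e, (v (tgt e) - v (src e)) * rescaledCost src tgt w p Λ e = 0 := by
  have hmin₀ : IsLocalMin (fun x => regularizer src tgt w p (fun u => exp (x * v u) * Λ u)) 0 :=
    Filter.Eventually.of_forall fun x => by
      simpa using hmin _ (fun u => mul_pos (exp_pos _) (hΛpos u))
        (fun u hu => by simp [hv u hu, hΛvis u hu])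
  have hderiv := hmin₀.hasDerivAt_eq_zero (hasDerivAt_regularizer_exp_smul v Λ hΛpos)
  simp_rw [mul_right_comm _ p, ← sum_mul] at hderiv
  exact (mul_eq_zero.1 hderiv).resolve_right hp

lemma sum_single_sub_single_mul [DecidableEq U] (f : E → ℝ) (i : U) :
    ∑ e, ((Pi.single i 1 : U → ℝ) (tgt e) - (Pi.single i 1 : U → ℝ) (src e)) * f e =
      ∑ e ∈ univ.filter (fun e => tgt e = i), f e - ∑ e ∈ univ.filter (fun e => src e = i), f e := by
  simp [sub_mul, sum_sub_distrib, Pi.single_apply, sum_filter, ite_mul]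

end

theorem minimizer_is_balanced_general
    {U E : Type*} [Fintype E] [DecidableEq U]
    (src tgt : E → U) (w : E → ℝ)
    (hidden : U → Prop)
    (p : ℝ) (hp : 0 < p)
    (Λ : U → ℝ) (hΛpos : ∀ u, 0 < Λ u) (hΛvis : ∀ u, ¬ hidden u → Λ u = 1)
    (hmin : ∀ Λ' : U → ℝ, (∀ u, 0 < Λ' u) → (∀ u, ¬ hidden u → Λ' u = 1) →
      ∑ e, (Λ (tgt e) / Λ (src e)) ^ p * |w e| ^ p ≤
        ∑ e, (Λ' (tgt e) / Λ' (src e)) ^ p * |w e| ^ p) :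
    ∀ i : U, hidden i →
      ∑ e ∈ Finset.univ.filter (fun e => tgt e = i),
          (Λ (tgt e) / Λ (src e)) ^ p * |w e| ^ p =
        ∑ e ∈ Finset.univ.filter (fun e => src e = i),
          (Λ (tgt e) / Λ (src e)) ^ p * |w e| ^ p := by
  intro i hi
  have hstat := sum_sub_mul_rescaledCost_eq_zero hp.ne' Λ hΛpos hΛvis hmin (Pi.single i 1)
    fun u hu => Pi.single_eq_of_ne (by rintro rfl; exact hu hi) 1
  rw [sum_single_sub_single_mul] at hstat
  exact sub_eq_zero.1 hstat

theorem minimizer_is_balanced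
    {U E : Type*} [Fintype U] [Fintype E] [DecidableEq U]
    (src tgt : E → U) (w : E → ℝ) (hw : ∀ e, w e ≠ 0)
    (hidden : U → Prop) [DecidablePred hidden]
    (p : ℝ) (hp : 0 < p)
    (Λ : U → ℝ) (hΛpos : ∀ u, 0 < Λ u) (hΛvis : ∀ u, ¬ hidden u → Λ u = 1)
    (hmin : ∀ Λ' : U → ℝ, (∀ u, 0 < Λ' u) → (∀ u, ¬ hidden u → Λ' u = 1) →
      ∑ e, (Λ (tgt e) / Λ (src e)) ^ p * |w e| ^ p ≤
        ∑ e, (Λ' (tgt e) / Λ' (src e)) ^ p * |w e| ^ p) :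
    ∀ i : U, hidden i →
      ∑ e ∈ Finset.univ.filter (fun e => tgt e = i),
          (Λ (tgt e) / Λ (src e)) ^ p * |w e| ^ p =
        ∑ e ∈ Finset.univ.filter (fun e => src e = i),
          (Λ (tgt e) / Λ (src e)) ^ p * |w e| ^ p :=
  minimizer_is_balanced_general src tgt w hidden p hp Λ hΛpos hΛvis hmin
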